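/- Let v : ℝⁿ → ℝ be quasi-concave, C^∞ on a domain U with Dv ≠ 0 in U, satisfying Δ_p v = 0 in U for some p > 4 and Δv ≤ 0 in U. Then pointwise in U: |D²v| ≤ 2|Δv| + 2 |D|Dv||, where D|Dv| = D²v Dv / |Dv|. -/

import Mathlib

/-- First partial derivative `∂v/∂xᵢ` of `v : ℝⁿ → ℝ`. -/
noncomputable def pgrad {n : ℕ} (v : (Fin n → ℝ) → ℝ) (x : Fin n → ℝ) (i : Fin n) : ℝ :=
  fderiv ℝ v x (Pi.single i 1)

/-- Second partial derivative `∂²v/∂xᵢ∂xⱼ` of `v : ℝⁿ → ℝ`. -/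
noncomputable def phess {n : ℕ} (v : (Fin n → ℝ) → ℝ) (x : Fin n → ℝ) (i j : Fin n) : ℝ :=
  fderiv ℝ (fun y => fderiv ℝ v y (Pi.single i 1)) x (Pi.single j 1)


lemma hasFDerivAt_pgrad {n : ℕ} {v : (Fin n → ℝ) → ℝ} {x : Fin n → ℝ}
    (hd : DifferentiableAt ℝ (fderiv ℝ v) x) (i : Fin n) :
    HasFDerivAt (fun y => fderiv ℝ v y (Pi.single i 1))
      ((ContinuousLinearMap.apply ℝ ℝ (Pi.single i (1:ℝ))).comp (fderiv ℝ (fderiv ℝ v) x)) x := by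
  have := (ContinuousLinearMap.apply ℝ ℝ (Pi.single i (1:ℝ))).hasFDerivAt.comp x hd.hasFDerivAt
  exact this

lemma phess_eq {n : ℕ} {v : (Fin n → ℝ) → ℝ} {x : Fin n → ℝ}
    (hd : DifferentiableAt ℝ (fderiv ℝ v) x) (i j : Fin n) :
    phess v x i j = fderiv ℝ (fderiv ℝ v) x (Pi.single j 1) (Pi.single i 1) := by
  rw [phess, (hasFDerivAt_pgrad hd i).fderiv]; rfl

lemma phess_symm {n : ℕ} {v : (Fin n → ℝ) → ℝ} {x : Fin n → ℝ}
    (hv : ContDiffAt ℝ (⊤ : ℕ∞) v x) (i j : Fin n) :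
    phess v x i j = phess v x j i := by
  have hd : DifferentiableAt ℝ (fderiv ℝ v) x :=
    (hv.fderiv_right (m := 1) (WithTop.coe_le_coe.mpr le_top)).differentiableAt one_ne_zero
  rw [phess_eq hd, phess_eq hd]
  exact (hv.isSymmSndFDerivAt (by simp only [minSmoothness_of_isRCLikeNormedField]; exact WithTop.coe_le_coe.mpr le_top)) _ _

lemma plap_key {n : ℕ} {p : ℝ} {v : (Fin n → ℝ) → ℝ} {x : Fin n → ℝ}
    (hv : ContDiffAt ℝ (⊤ : ℕ∞) v x) (hw : 0 < ∑ k, (pgrad v x k)^2)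
    (hpl : ∑ i, fderiv ℝ
        (fun y => (∑ k, (pgrad v y k) ^ 2) ^ ((p - 2) / 2) * pgrad v y i)
        x (Pi.single i 1) = 0) :
    (p - 2) * (∑ i, (∑ k, pgrad v x k * phess v x k i) * pgrad v x i)
      + (∑ k, (pgrad v x k)^2) * (∑ i, phess v x i i) = 0 := by
  classical
  set w : ℝ := ∑ k, (pgrad v x k)^2 with hwdef
  set α : ℝ := (p - 2) / 2 with halpha
  have hd : DifferentiableAt ℝ (fderiv ℝ v) x :=
    (hv.fderiv_right (m := 1) (WithTop.coe_le_coe.mpr le_top)).differentiableAt one_ne_zero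
  set D : Fin n → ((Fin n → ℝ) →L[ℝ] ℝ) :=
    fun k => (ContinuousLinearMap.apply ℝ ℝ (Pi.single k (1:ℝ))).comp (fderiv ℝ (fderiv ℝ v) x)
    with hD
  have hDk : ∀ k j, D k (Pi.single j 1) = phess v x k j := by
    intro k j
    rw [phess_eq hd]; rfl
  have hG : ∀ k, HasFDerivAt (fun y => pgrad v y k) (D k) x := by
    intro k
    exact hasFDerivAt_pgrad hd k
  have hW : HasFDerivAt (fun y => ∑ k, (pgrad v y k)^2)
      (∑ k, (2 * pgrad v x k) • D k) x := by
    have h2 : ∀ k : Fin n, HasFDerivAt (fun y => (pgrad v y k)^2)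
        ((2 * pgrad v x k) • D k) x := by
      intro k
      have := (hG k).mul (hG k)
      have h3 : pgrad v x k • D k + pgrad v x k • D k = (2 * pgrad v x k) • D k := by
        rw [two_mul, add_smul]
      rw [h3] at this
      simpa [pow_two, Pi.mul_def] using this
    simpa [Finset.sum_fn] using HasFDerivAt.sum (fun k (_ : k ∈ Finset.univ) => h2 k)
  have hwne : w ≠ 0 := ne_of_gt hw
  have hWr : HasFDerivAt (fun y => (∑ k, (pgrad v y k)^2) ^ α)
      ((α * w ^ (α - 1)) • (∑ k, (2 * pgrad v x k) • D k)) x := by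
    have := hW.rpow_const (p := α) (Or.inl hwne)
    simpa [hwdef] using this
  have hF : ∀ i : Fin n, HasFDerivAt
      (fun y => (∑ k, (pgrad v y k) ^ 2) ^ α * pgrad v y i)
      (w ^ α • D i + pgrad v x i • ((α * w ^ (α - 1)) • (∑ k, (2 * pgrad v x k) • D k))) x := by
    intro i
    have := hWr.mul (hG i)
    simpa [hwdef, Pi.mul_def] using this
  have hfd : ∀ i : Fin n, fderiv ℝ
      (fun y => (∑ k, (pgrad v y k) ^ 2) ^ α * pgrad v y i) x (Pi.single i 1)
      = w ^ α * phess v x i i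
        + pgrad v x i * (α * w ^ (α - 1) * ∑ k, 2 * pgrad v x k * phess v x k i) := by
    intro i
    rw [(hF i).fderiv]
    simp [ContinuousLinearMap.sum_apply, hDk, Finset.mul_sum, mul_comm, mul_assoc, mul_left_comm]
  rw [Finset.sum_congr rfl (fun i _ => hfd i)] at hpl
  have hwα : w ^ α = w ^ (α - 1) * w := by
    nth_rewrite 1 [show α = (α - 1) + 1 by ring]
    rw [Real.rpow_add hw, Real.rpow_one]
  have hstep : ∀ i : Fin n,
      w ^ α * phess v x i i
        + pgrad v x i * (α * w ^ (α - 1) * ∑ k, 2 * pgrad v x k * phess v x k i)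
      = w ^ (α - 1) * ((p - 2) * ((∑ k, pgrad v x k * phess v x k i) * pgrad v x i)
          + w * phess v x i i) := by
    intro i
    have h4 : ∑ k, 2 * pgrad v x k * phess v x k i
        = 2 * ∑ k, pgrad v x k * phess v x k i := by
      rw [Finset.mul_sum]
      exact Finset.sum_congr rfl (fun k _ => by ring)
    rw [h4, hwα, halpha]
    ring
  rw [Finset.sum_congr rfl (fun i _ => hstep i), ← Finset.mul_sum] at hpl
  rcases mul_eq_zero.mp hpl with h | h
  · exact absurd h (ne_of_gt (Real.rpow_pos_of_pos hw _))
  · rw [← h, Finset.sum_add_distrib, Finset.mul_sum, Finset.mul_sum]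

lemma clm_expand {n : ℕ} (L : (Fin n → ℝ) →L[ℝ] ℝ) (η : Fin n → ℝ) :
    L η = ∑ j, η j * L (Pi.single j 1) := by
  conv_lhs => rw [show η = ∑ j, η j • (Pi.single j (1:ℝ) : Fin n → ℝ) by
    ext k; simp [Pi.single_apply]]
  rw [map_sum]
  exact Finset.sum_congr rfl (fun j _ => by rw [map_smul]; rfl)

lemma qc_key {n : ℕ} {v : (Fin n → ℝ) → ℝ} {U : Set (Fin n → ℝ)} (hU : IsOpen U)
    {x : Fin n → ℝ} (hxU : x ∈ U) (hsm : ContDiffOn ℝ (⊤ : ℕ∞) v U)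
    (hqc : ∀ (x y : Fin n → ℝ) (l : ℝ), 0 ≤ l → l ≤ 1 →
      min (v x) (v y) ≤ v (l • x + (1 - l) • y))
    (ξ : Fin n → ℝ) (hperp : ∑ i, ξ i * pgrad v x i = 0) :
    ∑ i, ∑ j, phess v x i j * ξ i * ξ j ≤ 0 := by
  classical
  have hv : ContDiffAt ℝ (⊤ : ℕ∞) v x := (hsm x hxU).contDiffAt (hU.mem_nhds hxU)
  have hd : DifferentiableAt ℝ (fderiv ℝ v) x :=
    (hv.fderiv_right (m := 1) (WithTop.coe_le_coe.mpr le_top)).differentiableAt one_ne_zero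
  set f'' := fderiv ℝ (fderiv ℝ v) x with hf''
  -- the quadratic form equals the double sum
  have hform : ∑ i, ∑ j, phess v x i j * ξ i * ξ j = f'' ξ ξ := by
    rw [clm_expand (f'' ξ) ξ]
    apply Finset.sum_congr rfl; intro i _
    have : f'' ξ (Pi.single i 1)
        = ((ContinuousLinearMap.apply ℝ ℝ (Pi.single i (1:ℝ))).comp f'') ξ := rfl
    rw [this, clm_expand, Finset.mul_sum]
    apply Finset.sum_congr rfl; intro j _
    have : ((ContinuousLinearMap.apply ℝ ℝ (Pi.single i (1:ℝ))).comp f'') (Pi.single j 1)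
        = f'' (Pi.single j 1) (Pi.single i 1) := rfl
    rw [this, ← phess_eq hd]
    ring
  rw [hform]
  by_contra hQ
  push_neg at hQ
  -- hQ : 0 < f'' ξ ξ
  have hξ : ξ ≠ 0 := by
    rintro rfl
    simp at hQ
  have hξn : 0 < ‖ξ‖ := norm_pos_iff.mpr hξ
  obtain ⟨r, hr, hball⟩ := Metric.isOpen_iff.mp hU x hxU
  set ε : ℝ := r / ‖ξ‖ with hε
  have hεpos : 0 < ε := div_pos hr hξn
  have hmem : ∀ t : ℝ, |t| < ε → x + t • ξ ∈ U := by
    intro t ht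
    apply hball
    simp only [Metric.mem_ball, dist_eq_norm]
    have : x + t • ξ - x = t • ξ := by abel
    rw [this, norm_smul, Real.norm_eq_abs]
    calc |t| * ‖ξ‖ < ε * ‖ξ‖ := by exact mul_lt_mul_of_pos_right ht hξn
      _ = r := by rw [hε, div_mul_cancel₀ _ hξn.ne']
  set φ : ℝ → ℝ := fun t => v (x + t • ξ) with hφdef
  set ψ : ℝ → ℝ := fun t => fderiv ℝ v (x + t • ξ) ξ with hψdef
  have hline : ∀ t : ℝ, HasDerivAt (fun s : ℝ => x + s • ξ) ξ t := by
    intro t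
    simpa using ((hasDerivAt_id t).smul_const ξ).const_add x
  have hφ : ∀ t : ℝ, |t| < ε → HasDerivAt φ (ψ t) t := by
    intro t ht
    have hvd : DifferentiableAt ℝ v (x + t • ξ) :=
      ((hsm _ (hmem t ht)).contDiffAt (hU.mem_nhds (hmem t ht))).differentiableAt (by simp)
    exact hvd.hasFDerivAt.comp_hasDerivAt t (hline t)
  have hψ0 : ψ 0 = 0 := by
    have : x + (0:ℝ) • ξ = x := by simp
    rw [hψdef]
    simp only [this]
    rw [clm_expand, ← hperp]
    exact Finset.sum_congr rfl (fun i _ => rfl)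
  have hψd : HasDerivAt ψ (f'' ξ ξ) 0 := by
    have h1 : HasDerivAt (fun t : ℝ => fderiv ℝ v (x + t • ξ)) (f'' ξ) 0 := by
      have h0 : x + (0:ℝ) • ξ = x := by simp
      have hfd : HasFDerivAt (fderiv ℝ v) f'' (x + (0:ℝ) • ξ) := by
        rw [h0]; exact hd.hasFDerivAt
      have := hfd.comp_hasDerivAt (x := (0:ℝ)) (hline 0)
      simpa [Function.comp_def] using this
    have := h1.clm_apply (hasDerivAt_const (0:ℝ) ξ)
    simpa using this
  -- slope positivity near 0
  have hslope : Filter.Tendsto (fun t => ψ t / t) (nhdsWithin 0 {(0:ℝ)}ᶜ) (nhds (f'' ξ ξ)) := by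
    have := hasDerivAt_iff_tendsto_slope.mp hψd
    refine this.congr' ?_
    filter_upwards [self_mem_nhdsWithin] with t ht
    simp [slope_def_field, hψ0, div_eq_mul_inv, mul_comm]
  have hev : ∀ᶠ t in nhdsWithin 0 {(0:ℝ)}ᶜ, 0 < ψ t / t :=
    hslope.eventually (eventually_gt_nhds hQ)
  rw [eventually_nhdsWithin_iff] at hev
  obtain ⟨δ, hδpos, hδ⟩ := Metric.eventually_nhds_iff.mp hev
  set s : ℝ := min (δ/2) (ε/2) with hs
  have hspos : 0 < s := lt_min (by linarith) (by linarith)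
  have hsδ : s < δ := lt_of_le_of_lt (min_le_left _ _) (by linarith)
  have hsε : s < ε := lt_of_le_of_lt (min_le_right _ _) (by linarith)
  have habs : ∀ t : ℝ, t ∈ Set.Icc (-s) s → |t| < ε := by
    intro t ht
    rw [abs_lt]; constructor <;> [linarith [ht.1]; linarith [ht.2]]
  have hpos : ∀ t : ℝ, t ≠ 0 → |t| ≤ s → 0 < ψ t / t := by
    intro t ht hts
    refine hδ ?_ (by simpa using ht)
    rw [Real.dist_eq, sub_zero]
    exact lt_of_le_of_lt hts hsδ
  -- strict monotonicity on [0, s]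
  have hcont : ContinuousOn φ (Set.Icc (-s) s) := by
    intro t ht
    exact ((hφ t (habs t ht)).continuousAt).continuousWithinAt
  have hmono : StrictMonoOn φ (Set.Icc 0 s) := by
    apply strictMonoOn_of_deriv_pos (convex_Icc 0 s)
    · exact hcont.mono (Set.Icc_subset_Icc (by linarith) le_rfl)
    · intro t ht
      rw [interior_Icc] at ht
      have htne : t ≠ 0 := ne_of_gt ht.1
      have hta : |t| < ε := by rw [abs_lt]; constructor <;> [linarith [ht.1]; linarith [ht.2]]
      rw [(hφ t hta).deriv]
      have := hpos t htne (by rw [abs_of_pos ht.1]; linarith [ht.2])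
      have ht' : ψ t = (ψ t / t) * t := by field_simp
      rw [ht']
      exact mul_pos this ht.1
  have hanti : StrictAntiOn φ (Set.Icc (-s) 0) := by
    apply strictAntiOn_of_deriv_neg (convex_Icc (-s) 0)
    · exact hcont.mono (Set.Icc_subset_Icc le_rfl (by linarith))
    · intro t ht
      rw [interior_Icc] at ht
      have htne : t ≠ 0 := ne_of_lt ht.2
      have hta : |t| < ε := by rw [abs_lt]; constructor <;> [linarith [ht.1]; linarith [ht.2]]
      rw [(hφ t hta).deriv]
      have := hpos t htne (by rw [abs_of_neg ht.2]; linarith [ht.1])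
      have ht' : ψ t = (ψ t / t) * t := by field_simp
      rw [ht']
      exact mul_neg_of_pos_of_neg this ht.2
  have h1 : φ 0 < φ s := hmono (Set.mem_Icc.mpr ⟨le_rfl, le_of_lt hspos⟩)
    (Set.mem_Icc.mpr ⟨le_of_lt hspos, le_rfl⟩) hspos
  have h2 : φ 0 < φ (-s) := hanti (Set.mem_Icc.mpr ⟨le_rfl, by linarith⟩)
    (Set.mem_Icc.mpr ⟨by linarith, le_rfl⟩) (by linarith)
  have hmid := hqc (x + s • ξ) (x + (-s) • ξ) (1/2) (by norm_num) (by norm_num)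
  have hmideq : (1/2 : ℝ) • (x + s • ξ) + (1 - 1/2 : ℝ) • (x + (-s) • ξ) = x := by
    module
  rw [hmideq] at hmid
  have : min (φ s) (φ (-s)) ≤ φ 0 := by
    simpa [hφdef] using hmid
  rcases min_le_iff.mp this with h | h
  · linarith
  · linarith


private lemma sq_aux (a s : ℝ) (ha : 0 ≤ a) (hs : 0 ≤ s) :
    (9/4) * a ^ 2 + 2 * s ^ 2 ≤ (2 * a + 2 * s) ^ 2 := by
  nlinarith [mul_nonneg ha hs]

lemma final_algebra {n : ℕ} (p : ℝ) (hp : 4 < p) (H : Fin n → Fin n → ℝ) (g : Fin n → ℝ)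
    (Hsymm : ∀ i j, H i j = H j i)
    (hw : 0 < ∑ i, g i ^ 2)
    (hτ : ∑ i, H i i ≤ 0)
    (hlap : (p - 2) * (∑ i, (∑ k, g k * H k i) * g i) + (∑ k, g k ^ 2) * (∑ i, H i i) = 0)
    (hNSDperp : ∀ ξ : Fin n → ℝ, (∑ i, ξ i * g i = 0) → ∑ i, ∑ j, H i j * ξ i * ξ j ≤ 0) :
    Real.sqrt (∑ i, ∑ j, (H i j)^2)
      ≤ 2 * |∑ i, H i i|
        + 2 * (Real.sqrt (∑ i, (∑ j, H i j * g j) ^ 2) / Real.sqrt (∑ i, g i ^ 2)) := by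
  classical
  obtain ⟨w, hwdef⟩ : ∃ w : ℝ, w = ∑ i, g i ^ 2 := ⟨_, rfl⟩
  obtain ⟨τ, hτdef⟩ : ∃ τ : ℝ, τ = ∑ i, H i i := ⟨_, rfl⟩
  rw [← hwdef] at hw
  rw [← hτdef] at hτ
  rw [← hwdef, ← hτdef] at hlap
  rw [← hwdef, ← hτdef]
  obtain ⟨sw, hswdef⟩ : ∃ sw : ℝ, sw = Real.sqrt w := ⟨_, rfl⟩
  have hswpos : 0 < sw := hswdef ▸ Real.sqrt_pos.mpr hw
  have hswne : sw ≠ 0 := ne_of_gt hswpos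
  have hsw2 : sw ^ 2 = w := hswdef ▸ Real.sq_sqrt (le_of_lt hw)
  obtain ⟨u, hu⟩ : ∃ u : Fin n → ℝ, ∀ i, u i = g i / sw := ⟨_, fun _ => rfl⟩
  obtain ⟨b, hb⟩ : ∃ b : Fin n → ℝ, ∀ i, b i = (∑ j, H i j * g j) / sw := ⟨_, fun _ => rfl⟩
  obtain ⟨c, hc⟩ : ∃ c : ℝ, c = ∑ i, u i * b i := ⟨_, rfl⟩
  obtain ⟨m, hm⟩ : ∃ m : Fin n → ℝ, ∀ i, m i = ∑ j, H i j * b j := ⟨_, fun _ => rfl⟩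
  obtain ⟨B2, hB2⟩ : ∃ B2 : ℝ, B2 = ∑ i, b i ^ 2 := ⟨_, rfl⟩
  have hu2 : ∑ i, u i ^ 2 = 1 := by
    simp only [hu, div_pow]
    rw [← Finset.sum_div, ← hwdef, hsw2, div_self (ne_of_gt hw)]
  have hbu : ∀ i, ∑ j, H i j * u j = b i := by
    intro i
    rw [hb, Finset.sum_div]
    exact Finset.sum_congr rfl (fun j _ => by rw [hu, mul_div_assoc])
  have hbu' : ∀ j, ∑ i, H i j * u i = b j := by
    intro j
    rw [← hbu j]
    exact Finset.sum_congr rfl (fun i _ => by rw [Hsymm])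
  have hug : ∑ i, u i * g i = sw := by
    have h1 : ∀ i, u i * g i = g i ^ 2 / sw := by
      intro i; rw [hu]; ring
    rw [Finset.sum_congr rfl (fun i _ => h1 i), ← Finset.sum_div, ← hwdef, ← hsw2]
    rw [pow_two, mul_div_assoc, div_self hswne, mul_one]
  have hub : ∑ i, b i * u i = c := by
    rw [hc]; exact Finset.sum_congr rfl (fun i _ => by ring)
  have hswsw : sw * sw = w := by nlinarith [hsw2]
  -- value of c from the p-Laplace equation
  have hSc : (∑ i, (∑ k, g k * H k i) * g i) = c * w := by
    have h1 : ∀ i, (∑ k, g k * H k i) * g i = (u i * b i) * w := by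
      intro i
      have h2 : (∑ k, g k * H k i) = ∑ j, H i j * g j :=
        Finset.sum_congr rfl (fun k _ => by rw [Hsymm]; ring)
      rw [h2, hu, hb]
      field_simp
      linear_combination (∑ j, H i j * g j) * g i * hswsw
    rw [Finset.sum_congr rfl (fun i _ => h1 i), ← Finset.sum_mul, ← hc]
  have hcval : c * (p - 2) = -τ := by
    rw [hSc] at hlap
    have hwne : w ≠ 0 := ne_of_gt hw
    have : w * (c * (p - 2) + τ) = 0 := by linarith [hlap]
    rcases mul_eq_zero.mp this with h | h
    · exact absurd h hwne
    · linarith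
  obtain ⟨A, hA⟩ : ∃ A : Fin n → Fin n → ℝ,
      ∀ i j, A i j = H i j - u i * b j - b i * u j + c * (u i * u j) := ⟨_, fun _ _ => rfl⟩
  have hAsymm : ∀ i j, A i j = A j i := by
    intro i j; rw [hA, hA, Hsymm]; ring
  -- A is negative semidefinite
  have hANSD : ∀ ξ : Fin n → ℝ, ∑ i, ∑ j, A i j * ξ i * ξ j ≤ 0 := by
    intro ξ
    obtain ⟨t, htdef⟩ : ∃ t : ℝ, t = ∑ i, ξ i * u i := ⟨_, rfl⟩
    obtain ⟨η, hη⟩ : ∃ η : Fin n → ℝ, ∀ i, η i = ξ i - t * u i := ⟨_, fun _ => rfl⟩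
    have hξu : t = (∑ i, ξ i * g i) / sw := by
      rw [htdef, Finset.sum_div]
      exact Finset.sum_congr rfl (fun i _ => by rw [hu, mul_div_assoc])
    have hηperp : ∑ i, η i * g i = 0 := by
      have h1 : ∀ i, η i * g i = ξ i * g i - t * (u i * g i) := by
        intro i; rw [hη]; ring
      rw [Finset.sum_congr rfl (fun i _ => h1 i), Finset.sum_sub_distrib, ← Finset.mul_sum,
        hug, hξu]
      field_simp; ring
    have hq := hNSDperp η hηperp
    -- the two quadratic forms agree
    have hXY : ∑ i, ∑ j, H i j * u i * ξ j = ∑ i, ξ i * b i := by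
      rw [Finset.sum_comm]
      apply Finset.sum_congr rfl; intro j _
      have h1 : ∀ i, H i j * u i * ξ j = (H i j * u i) * ξ j := fun i => by ring
      rw [Finset.sum_congr rfl (fun i _ => h1 i), ← Finset.sum_mul, hbu' j]
      ring
    have hY : ∑ i, ∑ j, H i j * ξ i * u j = ∑ i, ξ i * b i := by
      apply Finset.sum_congr rfl; intro i _
      have h1 : ∀ j, H i j * ξ i * u j = ξ i * (H i j * u j) := fun j => by ring
      rw [Finset.sum_congr rfl (fun j _ => h1 j), ← Finset.mul_sum, hbu i]
    have hC : ∑ i, ∑ j, H i j * u i * u j = c := by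
      rw [hc]
      apply Finset.sum_congr rfl; intro i _
      have h1 : ∀ j, H i j * u i * u j = u i * (H i j * u j) := fun j => by ring
      rw [Finset.sum_congr rfl (fun j _ => h1 j), ← Finset.mul_sum, hbu i]
    have lhsval : ∑ i, ∑ j, H i j * η i * η j
        = (∑ i, ∑ j, H i j * ξ i * ξ j) - t * (∑ i, ξ i * b i) - t * (∑ i, ξ i * b i)
          + (t * t) * c := by
      have lhs1 : ∀ i j : Fin n, H i j * η i * η j
          = H i j * ξ i * ξ j - t * (H i j * u i * ξ j) - t * (H i j * ξ i * u j)
            + (t * t) * (H i j * u i * u j) := by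
        intro i j; rw [hη, hη]; ring
      calc ∑ i, ∑ j, H i j * η i * η j
          = ∑ i, ∑ j, (H i j * ξ i * ξ j - t * (H i j * u i * ξ j) - t * (H i j * ξ i * u j)
            + (t * t) * (H i j * u i * u j)) :=
            Finset.sum_congr rfl fun i _ => Finset.sum_congr rfl fun j _ => lhs1 i j
        _ = (∑ i, ∑ j, H i j * ξ i * ξ j) - t * (∑ i, ∑ j, H i j * u i * ξ j)
            - t * (∑ i, ∑ j, H i j * ξ i * u j) + (t * t) * (∑ i, ∑ j, H i j * u i * u j) := by
            simp only [Finset.sum_add_distrib, Finset.sum_sub_distrib, ← Finset.mul_sum]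
        _ = (∑ i, ∑ j, H i j * ξ i * ξ j) - t * (∑ i, ξ i * b i) - t * (∑ i, ξ i * b i)
            + (t * t) * c := by rw [hXY, hY, hC]
    have rhsval : ∑ i, ∑ j, A i j * ξ i * ξ j
        = (∑ i, ∑ j, H i j * ξ i * ξ j) - t * (∑ i, ξ i * b i) - t * (∑ i, ξ i * b i)
          + (t * t) * c := by
      have rhs1 : ∀ i j : Fin n, A i j * ξ i * ξ j
          = H i j * ξ i * ξ j - (ξ i * u i) * (ξ j * b j) - (ξ i * b i) * (ξ j * u j)
            + ((ξ i * u i) * (ξ j * u j)) * c := by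
        intro i j; rw [hA]; ring
      calc ∑ i, ∑ j, A i j * ξ i * ξ j
          = ∑ i, ∑ j, (H i j * ξ i * ξ j - (ξ i * u i) * (ξ j * b j)
            - (ξ i * b i) * (ξ j * u j) + ((ξ i * u i) * (ξ j * u j)) * c) :=
            Finset.sum_congr rfl fun i _ => Finset.sum_congr rfl fun j _ => rhs1 i j
        _ = (∑ i, ∑ j, H i j * ξ i * ξ j) - (∑ i, ∑ j, (ξ i * u i) * (ξ j * b j))
            - (∑ i, ∑ j, (ξ i * b i) * (ξ j * u j))
            + (∑ i, ∑ j, (ξ i * u i) * (ξ j * u j)) * c := by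
            simp only [Finset.sum_add_distrib, Finset.sum_sub_distrib, ← Finset.sum_mul]
        _ = (∑ i, ∑ j, H i j * ξ i * ξ j) - t * (∑ i, ξ i * b i) - t * (∑ i, ξ i * b i)
            + (t * t) * c := by
            rw [← Finset.sum_mul_sum, ← Finset.sum_mul_sum, ← Finset.sum_mul_sum, ← htdef]
            ring
    linarith [lhsval ▸ hq, rhsval]
  -- diagonal entries nonpositive
  have hdsingle : ∀ (i : Fin n) (r : ℝ), ∀ ξ : Fin n → ℝ, ξ = Pi.single i r →
      ∑ k, ∑ l, A k l * ξ k * ξ l = A i i * r * r := by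
    intro i r ξ hξ
    subst hξ
    simp [Pi.single_apply, mul_ite, ite_mul, mul_zero, zero_mul, Finset.sum_ite_eq',
      Finset.sum_ite_eq]
  have hAdiag : ∀ i, A i i ≤ 0 := by
    intro i
    have := hANSD (Pi.single i 1)
    rw [hdsingle i 1 _ rfl] at this
    linarith
  have hAoff : ∀ i j, (A i j) ^ 2 ≤ A i i * A j j := by
    intro i j
    rcases eq_or_ne i j with rfl | hij
    · rw [pow_two]
    · have hquad : ∀ r : ℝ, A i i * (r * r) + (2 * A i j) * r + A j j ≤ 0 := by
        intro r
        obtain ⟨ξ, hξ⟩ : ∃ ξ : Fin n → ℝ,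
            ∀ k, ξ k = (if k = i then r else 0) + (if k = j then 1 else 0) :=
          ⟨_, fun _ => rfl⟩
        have := hANSD ξ
        have heval : ∑ k, ∑ l, A k l * ξ k * ξ l
            = A i i * (r * r) + (2 * A i j) * r + A j j := by
          have expand : ∀ k l, A k l * ξ k * ξ l
              = (A k l * (if k = i then r else 0)) * (if l = i then r else 0)
                + (A k l * (if k = i then r else 0)) * (if l = j then 1 else 0)
                + (A k l * (if k = j then 1 else 0)) * (if l = i then r else 0)
                + (A k l * (if k = j then 1 else 0)) * (if l = j then 1 else 0) := by
            intro k l; rw [hξ, hξ]; ring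
          rw [Finset.sum_congr rfl fun k _ => Finset.sum_congr rfl fun l _ => expand k l]
          simp only [Finset.sum_add_distrib, mul_ite, ite_mul, mul_zero, zero_mul, mul_one,
            Finset.sum_ite_eq', Finset.mem_univ, if_true]
          rw [hAsymm j i]
          ring
        rw [heval] at this
        exact this
      have hd := discrim_le_zero_of_nonpos hquad
      rw [discrim] at hd
      nlinarith [hd]
  -- trace of A
  have hAtr : ∑ i, A i i = τ - c := by
    have h1 : ∀ i, A i i = H i i - (u i * b i) - (b i * u i) + (u i ^ 2) * c := by
      intro i; rw [hA]; ring
    rw [Finset.sum_congr rfl fun i _ => h1 i]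
    simp only [Finset.sum_add_distrib, Finset.sum_sub_distrib, ← Finset.sum_mul]
    rw [← hτdef, ← hc, hub, hu2]
    ring
  -- Frobenius identity
  have hum : ∑ i, u i * m i = B2 := by
    have h1 : ∀ i, u i * m i = ∑ j, (H i j * u i) * b j := by
      intro i; rw [hm, Finset.mul_sum]
      exact Finset.sum_congr rfl fun j _ => by ring
    rw [Finset.sum_congr rfl fun i _ => h1 i, Finset.sum_comm]
    have h2 : ∀ j, ∑ i, (H i j * u i) * b j = b j ^ 2 := by
      intro j
      rw [← Finset.sum_mul, hbu' j, pow_two]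
    rw [Finset.sum_congr rfl fun j _ => h2 j, hB2]
  have hA2 : ∑ i, ∑ j, (A i j) ^ 2 = (∑ i, ∑ j, (H i j) ^ 2) - 2 * B2 + c ^ 2 := by
    have inner : ∀ i, ∑ j, (A i j) ^ 2
        = (∑ j, (H i j) ^ 2) + (u i ^ 2) * B2 + (b i ^ 2) * 1 + (c ^ 2 * u i ^ 2) * 1
          - (2 * u i) * m i - (2 * b i) * b i + (2 * c * u i) * b i
          + (2 * (u i * b i)) * c - (2 * c * u i ^ 2) * c - (2 * c * (b i * u i)) * 1 := by
      intro i
      have e1 : ∀ j, (A i j) ^ 2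
          = (H i j) ^ 2 + (u i ^ 2) * (b j ^ 2) + (b i ^ 2) * (u j ^ 2)
            + (c ^ 2 * u i ^ 2) * (u j ^ 2)
            - (2 * u i) * (H i j * b j) - (2 * b i) * (H i j * u j)
            + (2 * c * u i) * (H i j * u j)
            + (2 * (u i * b i)) * (b j * u j) - (2 * c * u i ^ 2) * (b j * u j)
            - (2 * c * (b i * u i)) * (u j ^ 2) := by
        intro j; rw [hA]; ring
      rw [Finset.sum_congr rfl fun j _ => e1 j]
      simp only [Finset.sum_add_distrib, Finset.sum_sub_distrib, ← Finset.mul_sum]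
      rw [← hB2, hu2, ← hm, hbu i, hub]
    have inner2 : ∀ i, ∑ j, (A i j) ^ 2
        = (∑ j, (H i j) ^ 2) + B2 * (u i ^ 2) + (b i ^ 2) + (c ^ 2) * (u i ^ 2)
          - 2 * (u i * m i) - 2 * (b i ^ 2) + (2 * c) * (u i * b i) + (2 * c) * (u i * b i)
          - (2 * c ^ 2) * (u i ^ 2) - (2 * c) * (b i * u i) := by
      intro i; rw [inner i]; ring
    rw [Finset.sum_congr rfl fun i _ => inner2 i]
    simp only [Finset.sum_add_distrib, Finset.sum_sub_distrib, ← Finset.mul_sum]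
    rw [hu2, hum, hub, ← hc, ← hB2]
    ring
  have hAbound : ∑ i, ∑ j, (A i j) ^ 2 ≤ (τ - c) ^ 2 := by
    calc ∑ i, ∑ j, (A i j) ^ 2 ≤ ∑ i, ∑ j, A i i * A j j :=
          Finset.sum_le_sum (fun i _ => Finset.sum_le_sum (fun j _ => hAoff i j))
      _ = (∑ i, A i i) * (∑ j, A j j) := (Finset.sum_mul_sum _ _ _ _).symm
      _ = (τ - c) ^ 2 := by rw [hAtr]; ring
  have hcnn : 0 ≤ c := by nlinarith [hcval]
  have htc : (τ - c) ^ 2 ≤ (9/4) * τ ^ 2 := by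
    have hτeq : τ = -(c * (p - 2)) := by linarith [hcval]
    rw [hτeq]
    nlinarith [mul_nonneg (mul_nonneg (sq_nonneg c) (show (0:ℝ) ≤ p - 4 by linarith))
      (show (0:ℝ) ≤ 5 * p - 6 by linarith)]
  have hB2nonneg : 0 ≤ B2 := by
    rw [hB2]; exact Finset.sum_nonneg (fun i _ => sq_nonneg _)
  have hkey : ∑ i, ∑ j, (H i j) ^ 2 ≤ (9/4) * τ ^ 2 + 2 * B2 := by
    linarith [sq_nonneg c, hA2, hAbound, htc]
  have hB2eq : Real.sqrt (∑ i, (∑ j, H i j * g j) ^ 2) / Real.sqrt w = Real.sqrt B2 := by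
    have h1 : B2 = (∑ i, (∑ j, H i j * g j) ^ 2) / w := by
      rw [hB2, Finset.sum_div]
      apply Finset.sum_congr rfl; intro i _
      rw [hb, div_pow, hsw2]
    rw [h1, Real.sqrt_div (Finset.sum_nonneg (fun i _ => sq_nonneg _))]
  rw [hB2eq]
  have hrhs : 0 ≤ 2 * |τ| + 2 * Real.sqrt B2 := by positivity
  have hsqB2 : (Real.sqrt B2) ^ 2 = B2 := Real.sq_sqrt hB2nonneg
  have hstep : (9/4) * τ ^ 2 + 2 * B2 ≤ (2 * |τ| + 2 * Real.sqrt B2) ^ 2 := by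
    have := sq_aux |τ| (Real.sqrt B2) (abs_nonneg τ) (Real.sqrt_nonneg B2)
    rw [sq_abs, hsqB2] at this
    exact this
  have hfin : ∑ i, ∑ j, (H i j) ^ 2 ≤ (2 * |τ| + 2 * Real.sqrt B2) ^ 2 :=
    le_trans hkey hstep
  calc Real.sqrt (∑ i, ∑ j, (H i j) ^ 2)
      ≤ Real.sqrt ((2 * |τ| + 2 * Real.sqrt B2) ^ 2) := Real.sqrt_le_sqrt hfin
    _ = 2 * |τ| + 2 * Real.sqrt B2 := Real.sqrt_sq hrhs

theorem statement16 (n : ℕ) (hn : 2 ≤ n) (U : Set (Fin n → ℝ)) (hU : IsOpen U)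
    (p : ℝ) (hp : 4 < p)
    (v : (Fin n → ℝ) → ℝ)
    (hqc : ∀ (x y : Fin n → ℝ) (l : ℝ), 0 ≤ l → l ≤ 1 →
      min (v x) (v y) ≤ v (l • x + (1 - l) • y))
    (hsm : ContDiffOn ℝ (⊤ : ℕ∞) v U)
    (hDv : ∀ x ∈ U, (fun i => pgrad v x i) ≠ 0)
    (hsub : ∀ x ∈ U, ∑ i, phess v x i i ≤ 0)
    (hplap : ∀ x ∈ U, ∑ i, fderiv ℝ
        (fun y => (∑ k, (pgrad v y k) ^ 2) ^ ((p - 2) / 2) * pgrad v y i)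
        x (Pi.single i 1) = 0) :
    ∀ x ∈ U,
      Real.sqrt (∑ i, ∑ j, (phess v x i j) ^ 2)
        ≤ 2 * |∑ i, phess v x i i|
          + 2 * (Real.sqrt (∑ i, (∑ j, phess v x i j * pgrad v x j) ^ 2)
              / Real.sqrt (∑ i, (pgrad v x i) ^ 2)) := by
  intro x hx
  have hv : ContDiffAt ℝ (⊤ : ℕ∞) v x := (hsm x hx).contDiffAt (hU.mem_nhds hx)
  have hw : 0 < ∑ i, (pgrad v x i)^2 := by
    obtain ⟨i, hi⟩ := Function.ne_iff.mp (hDv x hx)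
    exact Finset.sum_pos' (fun j _ => sq_nonneg _)
      ⟨i, Finset.mem_univ i, pow_two_pos_of_ne_zero hi⟩
  exact final_algebra p hp (phess v x) (pgrad v x) (fun i j => phess_symm hv i j) hw (hsub x hx)
    (plap_key hv hw (hplap x hx)) (fun ξ hperp => qc_key hU hx hsm hqc ξ hperp)
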